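/- Let K = ℤ/15ℤ, let W = {id, (12)(34), (13)(24), (14)(23)} ≤ S₄ be the Klein four-group, and let χ : W → U(K) be the character determined by χ((12)(34)) = 4, χ((13)(24)) = 4, χ((14)(23)) = 1. Let E be the free K-module of rank 2. Then the K-module [χ]⁴(E) = T⁴(E)/_{χ⁻¹}T⁴(E) is not a free ℤ/15ℤ-module. -/

import Mathlib

noncomputable section

open scoped TensorProduct

/-- The action of a permutation `σ` of `Fin d` on the `d`-th tensor power
`T^d(E)`, determined by `σ • (x₁ ⊗ ⋯ ⊗ x_d) = x_{σ⁻¹(1)} ⊗ ⋯ ⊗ x_{σ⁻¹(d)}`. -/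
def permAct (K : Type*) [CommRing K] (E : Type*) [AddCommGroup E] [Module K E]
    (d : ℕ) (σ : Equiv.Perm (Fin d)) :
    (⨂[K] (_ : Fin d), E) ≃ₗ[K] ⨂[K] (_ : Fin d), E :=
  PiTensorProduct.reindex K (fun _ : Fin d => E) σ

/-- The submodule `_{χ⁻¹}T^d(E)` of `T^d(E)` generated by the elements
`χ⁻¹(σ) z − σ z` for `σ ∈ W`; the quotient by it is the `d`-th
semi-symmetric power `[χ]^d(E)` of weight `χ`. -/
def chiKer {K : Type*} [CommRing K] (E : Type*) [AddCommGroup E] [Module K E]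
    {d : ℕ} (W : Subgroup (Equiv.Perm (Fin d))) (χ : W →* Kˣ) :
    Submodule K (⨂[K] (_ : Fin d), E) :=
  Submodule.span K {w | ∃ (σ : W) (z : ⨂[K] (_ : Fin d), E),
    w = (((χ σ)⁻¹ : Kˣ) : K) • z - permAct K E d (σ : Equiv.Perm (Fin d)) z}

/-- The `d`-th semi-symmetric power `[χ]^d(E) = T^d(E)/_{χ⁻¹}T^d(E)`
of weight `χ` of the `K`-module `E`. -/
abbrev SemiPow {K : Type*} [CommRing K] (E : Type*) [AddCommGroup E] [Module K E]
    {d : ℕ} (W : Subgroup (Equiv.Perm (Fin d))) (χ : W →* Kˣ) :=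
  (⨂[K] (_ : Fin d), E) ⧸ chiKer E W χ

/-- The decomposable `d-χ`-vector `x₁ χ ⋯ χ x_d`. -/
def semiMk {K : Type*} [CommRing K] {E : Type*} [AddCommGroup E] [Module K E]
    {d : ℕ} (W : Subgroup (Equiv.Perm (Fin d))) (χ : W →* Kˣ)
    (x : Fin d → E) : SemiPow E W χ :=
  Submodule.Quotient.mk (PiTensorProduct.tprod K x)

/-!
Reduction modulo 3 turns `χ` into the trivial character, since `4 ≡ 1 [MOD 3]`. Hence the
indicators of the seven `W`-orbits of basis words `e_{w₁} ⊗ ⋯ ⊗ e_{w₄}` of `T⁴(E)` induce a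
surjection `[χ]⁴(E) → (ℤ/3ℤ)⁷`, and `3⁷` divides the order of `[χ]⁴(E)`. On the other hand every
basis word is, in the quotient, a unit multiple of one of seven orbit representatives, and the
representative `e₀ ⊗ e₀ ⊗ e₀ ⊗ e₀` is fixed by `(12)(34)`, on which `χ` is `4`; so it is killed
by `3`, and `[χ]⁴(E)` is a proper quotient of `(ℤ/15ℤ)⁷`. A free module of rank `r` has order
`15 ^ r`, and no `r` satisfies both `3⁷ ∣ 15 ^ r` and `15 ^ r < 15 ^ 7`.
-/

section

variable {K : Type*} [CommRing K] {E : Type*} [AddCommGroup E] [Module K E] {d : ℕ}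

theorem permAct_tprod (σ : Equiv.Perm (Fin d)) (x : Fin d → E) :
    permAct K E d σ (PiTensorProduct.tprod K x) = PiTensorProduct.tprod K (x ∘ σ.symm) :=
  PiTensorProduct.reindex_tprod σ x

theorem permAct_piTensorProduct_basis {κ : Type*} (e : Module.Basis κ K E)
    (σ : Equiv.Perm (Fin d)) (w : Fin d → κ) :
    permAct K E d σ (Basis.piTensorProduct (fun _ => e) w)
      = Basis.piTensorProduct (fun _ => e) (w ∘ σ.symm) := by
  simp only [Basis.piTensorProduct_apply, permAct_tprod]
  rfl

namespace SemiPow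

variable {W : Subgroup (Equiv.Perm (Fin d))} {χ : W →* Kˣ}

theorem mk_permAct (σ : W) (z : ⨂[K] (_ : Fin d), E) :
    (Submodule.Quotient.mk (permAct K E d σ z) : SemiPow E W χ)
      = (((χ σ)⁻¹ : Kˣ) : K) • Submodule.Quotient.mk z := by
  rw [← Submodule.Quotient.mk_smul, eq_comm, Submodule.Quotient.eq]
  exact Submodule.subset_span ⟨σ, z, rfl⟩

theorem semiMk_comp_symm (σ : W) (x : Fin d → E) :
    semiMk W χ (x ∘ (σ : Equiv.Perm (Fin d)).symm) = (((χ σ)⁻¹ : Kˣ) : K) • semiMk W χ x := by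
  rw [semiMk, ← permAct_tprod, mk_permAct, semiMk]

theorem semiMk_eq_smul_semiMk_comp_symm (σ : W) (x : Fin d → E) :
    semiMk W χ x = (χ σ : K) • semiMk W χ (x ∘ (σ : Equiv.Perm (Fin d)).symm) := by
  rw [semiMk_comp_symm, smul_smul, ← Units.val_mul, mul_inv_cancel, Units.val_one, one_smul]

theorem smul_semiMk_of_comp_symm_eq {σ : W} {x : Fin d → E}
    (hx : x ∘ (σ : Equiv.Perm (Fin d)).symm = x) : (χ σ : K) • semiMk W χ x = semiMk W χ x := by
  conv_rhs => rw [semiMk_eq_smul_semiMk_comp_symm σ, hx]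

variable {κ : Type*} (e : Module.Basis κ K E)

theorem span_semiMk_basis_eq_top :
    Submodule.span K (Set.range fun w : Fin d → κ => semiMk W χ (e ∘ w)) = ⊤ := by
  have hrange : (Set.range fun w : Fin d → κ => semiMk W χ (e ∘ w))
      = (chiKer E W χ).mkQ '' Set.range (Basis.piTensorProduct fun _ => e) := by
    rw [← Set.range_comp]
    congr
    funext w
    simp [semiMk, Function.comp_def]
  rw [hrange, ← Submodule.map_span, Module.Basis.span_eq, Submodule.map_top, Submodule.range_mkQ]

variable {N : Type*} [AddCommGroup N] [Module K N]

def liftOfBasis (f : (Fin d → κ) → N)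
    (hf : ∀ (σ : W) (w : Fin d → κ),
      (((χ σ)⁻¹ : Kˣ) : K) • f w = f (w ∘ (σ : Equiv.Perm (Fin d)).symm)) :
    SemiPow E W χ →ₗ[K] N :=
  (chiKer E W χ).liftQ ((Basis.piTensorProduct fun _ => e).constr K f) <| by
    rw [chiKer, Submodule.span_le]
    rintro _ ⟨σ, z, rfl⟩
    have hzero : (Basis.piTensorProduct fun _ => e).constr K f ∘ₗ
        ((((χ σ)⁻¹ : Kˣ) : K) • LinearMap.id - (permAct K E d σ).toLinearMap) = 0 :=
      (Basis.piTensorProduct fun _ => e).ext fun w => by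
        simp only [LinearMap.comp_apply, LinearMap.sub_apply, LinearMap.smul_apply,
          LinearMap.id_apply, LinearEquiv.coe_coe, permAct_piTensorProduct_basis, map_sub,
          map_smul, Module.Basis.constr_basis, hf, sub_self, LinearMap.zero_apply]
    exact LinearMap.congr_fun hzero z

theorem liftOfBasis_semiMk (f : (Fin d → κ) → N)
    (hf : ∀ (σ : W) (w : Fin d → κ),
      (((χ σ)⁻¹ : Kˣ) : K) • f w = f (w ∘ (σ : Equiv.Perm (Fin d)).symm)) (w : Fin d → κ) :
    liftOfBasis e f hf (semiMk W χ (e ∘ w)) = f w := by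
  have htprod : PiTensorProduct.tprod K (e ∘ w) = Basis.piTensorProduct (fun _ => e) w := by
    rw [Basis.piTensorProduct_apply]
    rfl
  rw [liftOfBasis, semiMk, htprod, Submodule.liftQ_apply, Module.Basis.constr_basis]

end SemiPow

end

theorem Module.Free.natCard_eq_pow_finrank (R M : Type*) [CommRing R] [Nontrivial R] [Finite R]
    [AddCommGroup M] [Module R M] [Module.Free R M] [Module.Finite R M] :
    Nat.card M = Nat.card R ^ Module.finrank R M := by
  have := Fintype.ofFinite R
  have := Module.finite_of_finite R (M := M)
  have := Fintype.ofFinite M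
  rw [Module.finrank_eq_card_chooseBasisIndex, Nat.card_eq_fintype_card, Nat.card_eq_fintype_card]
  exact Module.card_fintype (Module.Free.chooseBasis R M)

open Equiv in
def kleinFour : Finset (Perm (Fin 4)) :=
  {1, swap 0 1 * swap 2 3, swap 0 2 * swap 1 3, swap 0 3 * swap 1 2}

def kleinOrbitRep : Fin 7 → Fin 4 → Fin 2 :=
  ![![0,0,0,0], ![1,1,1,1], ![1,0,0,0], ![0,1,1,1], ![1,1,0,0], ![1,0,1,0], ![1,0,0,1]]

def kleinOrbitIndicator (w : Fin 4 → Fin 2) : Fin 7 → ZMod 3 :=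
  fun j => if ∃ σ ∈ kleinFour, w ∘ σ.symm = kleinOrbitRep j then 1 else 0

theorem kleinOrbitIndicator_comp_symm {σ : Equiv.Perm (Fin 4)} (hσ : σ ∈ kleinFour)
    (w : Fin 4 → Fin 2) : kleinOrbitIndicator (w ∘ σ.symm) = kleinOrbitIndicator w := by
  revert σ w
  decide

theorem kleinOrbitIndicator_kleinOrbitRep (j : Fin 7) :
    kleinOrbitIndicator (kleinOrbitRep j) = Pi.single j 1 := by
  revert j
  decide

theorem exists_comp_symm_eq_kleinOrbitRep (w : Fin 4 → Fin 2) :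
    ∃ j, ∃ σ ∈ kleinFour, w ∘ σ.symm = kleinOrbitRep j := by
  revert w
  decide

instance : Module (ZMod 15) (ZMod 3) :=
  Module.compHom (ZMod 3) (ZMod.castHom (by norm_num : 3 ∣ 15) (ZMod 3))

theorem inv_smul_zmod_three_eq_self (u : (ZMod 15)ˣ)
    (hu : (u : ZMod 15) = 1 ∨ (u : ZMod 15) = 4) (v : ZMod 3) :
    ((u⁻¹ : (ZMod 15)ˣ) : ZMod 15) • v = v := by
  have h : (u : ZMod 15) • v = v := by
    rcases hu with h | h <;> rw [h] <;> revert v <;> decide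
  rw [← Units.smul_def, inv_smul_eq_iff, Units.smul_def, h]

section KleinFour

open SemiPow

variable {W : Subgroup (Equiv.Perm (Fin 4))} {χ : W →* (ZMod 15)ˣ}

theorem three_pow_dvd_natCard_semiPow (hW : (W : Set (Equiv.Perm (Fin 4))) = kleinFour)
    (hχ : ∀ σ : W, (χ σ : ZMod 15) = 1 ∨ (χ σ : ZMod 15) = 4) :
    3 ^ 7 ∣ Nat.card (SemiPow (Fin 2 → ZMod 15) W χ) := by
  let f := liftOfBasis (W := W) (χ := χ) (Pi.basisFun (ZMod 15) (Fin 2)) kleinOrbitIndicator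
    fun σ w => by
      have hσ : (σ : Equiv.Perm (Fin 4)) ∈ kleinFour := by
        rw [← Finset.mem_coe, ← hW]
        exact σ.2
      rw [kleinOrbitIndicator_comp_symm hσ]
      funext j
      exact inv_smul_zmod_three_eq_self _ (hχ σ) _
  have hf : Function.Surjective f := fun v => by
    refine ⟨∑ j, (v j).val • semiMk W χ (Pi.basisFun (ZMod 15) (Fin 2) ∘ kleinOrbitRep j), ?_⟩
    simp only [map_sum, map_nsmul, f, liftOfBasis_semiMk, kleinOrbitIndicator_kleinOrbitRep]
    simp_rw [← Pi.single_smul, nsmul_eq_mul, mul_one, ZMod.natCast_zmod_val,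
      Finset.univ_sum_single]
  simpa using AddSubgroup.card_dvd_of_surjective f.toAddMonoidHom hf

theorem natCard_semiPow_lt (hW : (W : Set (Equiv.Perm (Fin 4))) = kleinFour) (σ : W)
    (hσ : (χ σ : ZMod 15) = 4) : Nat.card (SemiPow (Fin 2 → ZMod 15) W χ) < 15 ^ 7 := by
  set e := Pi.basisFun (ZMod 15) (Fin 2)
  set g := Fintype.linearCombination (ZMod 15) fun j => semiMk W χ (e ∘ kleinOrbitRep j)
  have hsurj : Function.Surjective g := by
    rw [← LinearMap.range_eq_top, Fintype.range_linearCombination, eq_top_iff,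
      ← span_semiMk_basis_eq_top (W := W) (χ := χ) e, Submodule.span_le]
    rintro _ ⟨w, rfl⟩
    show semiMk W χ (e ∘ w) ∈ _
    obtain ⟨j, τ, hτ, hw⟩ := exists_comp_symm_eq_kleinOrbitRep w
    have hτW : τ ∈ W := by
      rw [← SetLike.mem_coe, hW]
      exact hτ
    rw [semiMk_eq_smul_semiMk_comp_symm ⟨τ, hτW⟩, Function.comp_assoc, hw]
    exact Submodule.smul_mem _ _ (Submodule.subset_span ⟨j, rfl⟩)
  have htorsion : (3 : ZMod 15) • semiMk W χ (e ∘ kleinOrbitRep 0) = 0 := by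
    have hfix : (e ∘ kleinOrbitRep 0) ∘ (σ : Equiv.Perm (Fin 4)).symm = e ∘ kleinOrbitRep 0 := by
      rw [show kleinOrbitRep 0 = 0 by decide]
      rfl
    have h4 := smul_semiMk_of_comp_symm_eq (χ := χ) hfix
    rw [hσ] at h4
    calc (3 : ZMod 15) • semiMk W χ (e ∘ kleinOrbitRep 0)
        = (4 : ZMod 15) • semiMk W χ (e ∘ kleinOrbitRep 0) - semiMk W χ (e ∘ kleinOrbitRep 0) := by
          module
      _ = 0 := by rw [h4, sub_self]
  have hninj : ¬ Function.Injective g := fun hinj => by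
    have hg : g (Pi.single 0 3) = g 0 := by
      simp [g, Fintype.linearCombination_apply, Pi.single_apply, htorsion]
    exact absurd (hinj hg) (by decide)
  have := Finite.of_surjective g hsurj
  have := Fintype.ofFinite (SemiPow (Fin 2 → ZMod 15) W χ)
  simpa [Nat.card_eq_fintype_card] using Fintype.card_lt_of_surjective_not_injective g hsurj hninj

theorem not_free_semiPow_kleinFour (hW : (W : Set (Equiv.Perm (Fin 4))) = kleinFour)
    (hχ : ∀ σ : W, (χ σ : ZMod 15) = 1 ∨ (χ σ : ZMod 15) = 4) (σ : W) (hσ : (χ σ : ZMod 15) = 4) :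
    ¬ Module.Free (ZMod 15) (SemiPow (Fin 2 → ZMod 15) W χ) := by
  intro hfree
  have : Fact (1 < 15) := ⟨by norm_num⟩
  have hcard := Module.Free.natCard_eq_pow_finrank (ZMod 15) (SemiPow (Fin 2 → ZMod 15) W χ)
  have hdvd := three_pow_dvd_natCard_semiPow hW hχ
  have hlt := natCard_semiPow_lt hW σ hσ
  rw [hcard, Nat.card_zmod] at hdvd hlt
  have hrank : Module.finrank (ZMod 15) (SemiPow (Fin 2 → ZMod 15) W χ) ≤ 6 :=
    Nat.lt_succ_iff.mp ((Nat.pow_lt_pow_iff_right (by norm_num)).mp hlt)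
  have := hdvd.trans (Nat.pow_dvd_pow 15 hrank)
  norm_num at this

end KleinFour

/-- Example II.11 (i). Over `K = ℤ/15ℤ`, for the Klein
four-group `W = {1, (12)(34), (13)(24), (14)(23)} ≤ S₄` and the character
`χ` with `χ((12)(34)) = 4`, `χ((13)(24)) = 4`, `χ((14)(23)) = 1`, the module
`[χ]⁴(E) = T⁴(E)/_{χ⁻¹}T⁴(E)` over the free rank-2 module `E` is not free. -/
theorem semiPow_not_free_example
    (c₁ c₂ c₃ : Equiv.Perm (Fin 4))
    (hc₁ : c₁ = Equiv.swap 0 1 * Equiv.swap 2 3)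
    (hc₂ : c₂ = Equiv.swap 0 2 * Equiv.swap 1 3)
    (hc₃ : c₃ = Equiv.swap 0 3 * Equiv.swap 1 2)
    (W : Subgroup (Equiv.Perm (Fin 4)))
    (hW : (W : Set (Equiv.Perm (Fin 4))) = {1, c₁, c₂, c₃})
    (χ : W →* (ZMod 15)ˣ)
    (hχ₁ : ∀ h : c₁ ∈ W, ((χ ⟨c₁, h⟩ : (ZMod 15)ˣ) : ZMod 15) = 4)
    (hχ₂ : ∀ h : c₂ ∈ W, ((χ ⟨c₂, h⟩ : (ZMod 15)ˣ) : ZMod 15) = 4)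
    (hχ₃ : ∀ h : c₃ ∈ W, ((χ ⟨c₃, h⟩ : (ZMod 15)ˣ) : ZMod 15) = 1) :
    ¬ Module.Free (ZMod 15) (SemiPow (Fin 2 → ZMod 15) W χ) := by
  subst hc₁ hc₂ hc₃
  have hc₁W : Equiv.swap 0 1 * Equiv.swap 2 3 ∈ W := by
    rw [← SetLike.mem_coe, hW]
    simp
  refine not_free_semiPow_kleinFour (by rw [hW, kleinFour]; push_cast; rfl) ?_ ⟨_, hc₁W⟩ (hχ₁ hc₁W)
  rintro ⟨σ, hσ⟩
  have hσ' : σ ∈ (W : Set (Equiv.Perm (Fin 4))) := hσ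
  rw [hW] at hσ'
  rcases hσ' with rfl | rfl | rfl | rfl
  · exact Or.inl (congrArg Units.val (map_one χ))
  · exact Or.inr (hχ₁ hσ)
  · exact Or.inr (hχ₂ hσ)
  · exact Or.inl (hχ₃ hσ)
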